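/- Let S : ℍ → ℂ be any function and suppose f₁, f₂ : ℍ → ℂ are twice continuously differentiable functions (of the real coordinates x, y) which are both invariant under the action of SL(2,ℤ) by Möbius transformations, both satisfy the inhomogeneous Laplace equation y²·(∂ₓ² + ∂_y²)f_i(x+iy) − 12·f_i(x+iy) = S(x+iy) on ℍ, and both satisfy a moderate growth condition: there exist constants C_i > 0 with |f_i(x+iy)| ≤ C_i·y³ for every point x+iy in the standard fundamental domain F = { x+iy : |x| ≤ 1/2, x²+y² ≥ 1, y > 0 }. Then f₁ = f₂. -/

import Mathlib

open Real

/-- The flat Laplacian `∂ₓ² + ∂_y²` of a function on `ℂ ≃ ℝ²`, via iterated real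
Fréchet derivatives in the directions `1` and `I`. -/
noncomputable def laplacian (f : ℂ → ℂ) (z : ℂ) : ℂ :=
  fderiv ℝ (fun w => fderiv ℝ f w 1) z 1 +
    fderiv ℝ (fun w => fderiv ℝ f w Complex.I) z Complex.I

/-!
The difference `g = f₁ - f₂` is an `SL(2,ℤ)`-invariant solution of `y² Δg = 12 g`, and invariance
turns the bound `O(y³)` on the fundamental domain into `‖g‖ ≤ C max(y, 1/y)³` on all of `ℍ`.
For `‖c‖ ≤ 1` the real function `u = Re(c g)` is 1-periodic and solves the same equation, as do
`y⁴` and `y⁻³`. Periodicity makes the strips `y₀ ≤ y ≤ T` compact modulo `z ↦ z + 1`, so the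
maximum principle applies there and compares `u` with `ε y⁴ + K y⁻³`; letting `T → ∞`, `ε → 0`
and `y₀ → 0` gives `‖g‖ ≤ C y⁻³`. Then `g` is bounded on the fundamental domain, hence on `ℍ`,
and the same comparison, now with `K → 0`, forces `g = 0`.
-/

open Complex Filter Topology Set ModularGroup
open scoped UpperHalfPlane Modular Laplacian MatrixGroups ComplexConjugate

theorem IsLocalMax.deriv_deriv_nonpos {f : ℝ → ℝ} {x : ℝ} (hmax : IsLocalMax f x)
    (hf : ContinuousAt f x) : deriv (deriv f) x ≤ 0 := by
  by_contra! hpos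
  have hmin := isLocalMin_of_deriv_deriv_pos hpos hmax.deriv_eq_zero hf
  have hconst : f =ᶠ[𝓝 x] fun _ => f x := by
    filter_upwards [hmax, hmin] with y hy₁ hy₂ using le_antisymm hy₁ hy₂
  have hderiv : deriv f =ᶠ[𝓝 x] fun _ => 0 := by
    filter_upwards [hconst.eventuallyEq_nhds] with y hy
    rw [hy.deriv_eq, deriv_const]
  simp [hderiv.deriv_eq] at hpos

theorem IsLocalMax.fderiv_fderiv_apply_nonpos {E : Type*} [NormedAddCommGroup E]
    [NormedSpace ℝ E] {u : E → ℝ} {z : E} (hmax : IsLocalMax u z) (hu : ContDiffAt ℝ 2 u z)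
    (v : E) : fderiv ℝ (fderiv ℝ u) z v v ≤ 0 := by
  set line : ℝ → E := fun t => z + t • v
  have hline : ∀ t, HasDerivAt line v t := fun t =>
    (((hasDerivAt_id t).smul_const v).const_add z).congr_deriv (one_smul ℝ v)
  have hline0 : line 0 = z := by simp [line]
  have hdiff : ∀ᶠ t in 𝓝 (0 : ℝ), DifferentiableAt ℝ u (line t) :=
    (hline 0).continuousAt.eventually (hline0 ▸ hu.eventually (by simp)) |>.mono
      fun t ht => ht.differentiableAt (by simp)
  have hderiv : deriv (u ∘ line) =ᶠ[𝓝 0] fun t => fderiv ℝ u (line t) v := by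
    filter_upwards [hdiff] with t ht
    exact (ht.hasFDerivAt.comp_hasDerivAt t (hline t)).deriv
  have hu' : DifferentiableAt ℝ (fderiv ℝ u) (line 0) :=
    hline0 ▸ (hu.fderiv_right (m := 1) le_rfl).differentiableAt one_ne_zero
  have hderiv2 : HasDerivAt (fun t => fderiv ℝ u (line t) v) (fderiv ℝ (fderiv ℝ u) z v v) 0 := by
    simpa [hline0] using (hu'.hasFDerivAt.comp_hasDerivAt 0 (hline 0)).clm_apply
      (hasDerivAt_const 0 v)
  have hmax' : IsLocalMax (u ∘ line) 0 :=
    IsLocalMax.comp_continuous (by rwa [hline0]) (hline 0).continuousAt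
  have hcont : ContinuousAt (u ∘ line) 0 :=
    ContinuousAt.comp (by rw [hline0]; exact hu.continuousAt) (hline 0).continuousAt
  simpa [hderiv.deriv_eq, hderiv2.deriv] using hmax'.deriv_deriv_nonpos hcont

theorem IsLocalMax.laplacian_nonpos {E : Type*} [NormedAddCommGroup E] [InnerProductSpace ℝ E]
    [FiniteDimensional ℝ E] {u : E → ℝ} {z : E} (hmax : IsLocalMax u z)
    (hu : ContDiffAt ℝ 2 u z) : Δ u z ≤ 0 := by
  rw [InnerProductSpace.laplacian_eq_iteratedFDeriv_stdOrthonormalBasis]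
  exact Finset.sum_nonpos fun i _ => by
    simpa [iteratedFDeriv_two_apply] using hmax.fderiv_fderiv_apply_nonpos hu _

theorem ContDiffAt.laplacian_eq_laplacian {f : ℂ → ℂ} {z : ℂ} (hf : ContDiffAt ℝ 2 f z) :
    laplacian f z = Δ f z := by
  have hf' : DifferentiableAt ℝ (fderiv ℝ f) z :=
    (hf.fderiv_right (m := 1) le_rfl).differentiableAt one_ne_zero
  rw [InnerProductSpace.laplacian_eq_iteratedFDeriv_complexPlane, laplacian]
  simp [iteratedFDeriv_two_apply, fderiv_clm_apply hf' (differentiableAt_const _)]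

theorem laplacian_comp_im {φ φ' : ℝ → ℝ} {φ'' : ℝ} {z : ℂ}
    (hφ : ∀ᶠ y in 𝓝 z.im, HasDerivAt φ (φ' y) y) (hφ' : HasDerivAt φ' φ'' z.im) :
    Δ (fun w : ℂ => φ w.im) z = φ'' := by
  have hderiv : fderiv ℝ (fun w : ℂ => φ w.im) =ᶠ[𝓝 z] fun w => φ' w.im • imCLM := by
    filter_upwards [continuous_im.continuousAt.eventually hφ] with w hw
    exact (hw.comp_hasFDerivAt w imCLM.hasFDerivAt).fderiv
  have hderiv2 : HasFDerivAt (fun w : ℂ => φ' w.im • imCLM) ((φ'' • imCLM).smulRight imCLM) z :=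
    (hφ'.comp_hasFDerivAt z imCLM.hasFDerivAt).smul_const imCLM
  rw [InnerProductSpace.laplacian_eq_iteratedFDeriv_complexPlane]
  simp [iteratedFDeriv_two_apply, hderiv.fderiv_eq, hderiv2.fderiv]

theorem nonpos_of_laplacian_pos_of_periodic {w : ℂ → ℝ} {a b : ℝ}
    (hw : ∀ z, z.im ∈ Icc a b → ContDiffAt ℝ 2 w z)
    (hper : ∀ (n : ℤ) z, z.im ∈ Icc a b → w (z + n) = w z)
    (hsub : ∀ z, z.im ∈ Ioo a b → 0 < w z → 0 < Δ w z)
    (hbot : ∀ z, z.im = a → w z ≤ 0) (htop : ∀ z, z.im = b → w z ≤ 0)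
    {z : ℂ} (hz : z.im ∈ Icc a b) : w z ≤ 0 := by
  have hcell : IsCompact (Icc 0 1 ×ℂ Icc a b) := isCompact_Icc.reProdIm isCompact_Icc
  have hne : (Icc 0 1 ×ℂ Icc a b).Nonempty :=
    ⟨a * I, by simp [mem_reProdIm, nonempty_Icc.mp ⟨_, hz⟩]⟩
  obtain ⟨z₁, hz₁, hmax⟩ :=
    hcell.exists_isMaxOn hne fun z hz => (hw z hz.2).continuousAt.continuousWithinAt
  have hle : ∀ z, z.im ∈ Icc a b → w z ≤ w z₁ := fun z hz => by
    rw [← hper (-⌊z.re⌋) z hz]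
    refine hmax ⟨?_, by simpa using hz⟩
    simpa [← sub_eq_add_neg] using (Int.fract_lt_one z.re).le
  by_contra! hpos
  have hpos₁ : 0 < w z₁ := hpos.trans_le (hle z hz)
  have hz₁' : z₁.im ∈ Ioo a b := by
    refine ⟨hz₁.2.1.lt_of_ne fun h => ?_, hz₁.2.2.lt_of_ne fun h => ?_⟩
    · exact (hbot z₁ h.symm).not_gt hpos₁
    · exact (htop z₁ h).not_gt hpos₁
  have hlocmax : IsLocalMax w z₁ := by
    filter_upwards [(isOpen_Ioo.preimage continuous_im).mem_nhds hz₁'] with z hz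
    exact hle z (Ioo_subset_Icc_self hz)
  exact (hlocmax.laplacian_nonpos (hw z₁ hz₁.2)).not_gt (hsub z₁ hz₁' hpos₁)

/-- `y ^ s` solves `y² φ'' = 12 φ` exactly for `s(s - 1) = 12`, that is `s = 4` or `s = -3`. -/
noncomputable def barrier (α β y : ℝ) : ℝ := α * y ^ 4 + β * (y ^ 3)⁻¹

theorem hasDerivAt_barrier (α β : ℝ) {y : ℝ} (hy : y ≠ 0) :
    HasDerivAt (barrier α β) (4 * α * y ^ 3 - 3 * β * (y ^ 4)⁻¹) y := by
  refine (((hasDerivAt_pow 4 y).const_mul α).fun_add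
    (((hasDerivAt_pow 3 y).fun_inv (pow_ne_zero 3 hy)).const_mul β)).congr_deriv ?_
  field_simp
  ring

theorem contDiffAt_barrier_im (α β : ℝ) {z : ℂ} (hz : 0 < z.im) :
    ContDiffAt ℝ 2 (fun w : ℂ => barrier α β w.im) z := by
  have him : ContDiffAt ℝ 2 (fun w : ℂ => w.im) z := imCLM.contDiff.contDiffAt
  unfold barrier
  fun_prop (disch := exact pow_ne_zero 3 hz.ne')

theorem im_sq_mul_laplacian_barrier (α β : ℝ) {z : ℂ} (hz : 0 < z.im) :
    z.im ^ 2 * Δ (fun w : ℂ => barrier α β w.im) z = 12 * barrier α β z.im := by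
  have hφ' : HasDerivAt (fun y => 4 * α * y ^ 3 - 3 * β * (y ^ 4)⁻¹)
      (12 * α * z.im ^ 2 + 12 * β * (z.im ^ 5)⁻¹) z.im := by
    refine (((hasDerivAt_pow 3 z.im).const_mul (4 * α)).fun_sub
      (((hasDerivAt_pow 4 z.im).fun_inv (pow_ne_zero 4 hz.ne')).const_mul (3 * β))).congr_deriv ?_
    field_simp
    ring
  rw [laplacian_comp_im ((eventually_ne_nhds hz.ne').mono fun y => hasDerivAt_barrier α β) hφ',
    barrier]
  field_simp

theorem le_barrier_of_le_on_lines {u : ℂ → ℝ} (hu : ContDiffOn ℝ 2 u {z | 0 < z.im})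
    (hper : ∀ (n : ℤ) z, 0 < z.im → u (z + n) = u z)
    (hsub : ∀ z, 0 < z.im → 12 * u z ≤ z.im ^ 2 * Δ u z) {α β a b : ℝ} (ha : 0 < a)
    (hbot : ∀ z, z.im = a → u z ≤ barrier α β a) (htop : ∀ z, z.im = b → u z ≤ barrier α β b)
    {z : ℂ} (hz : z.im ∈ Icc a b) : u z ≤ barrier α β z.im := by
  have him_pos : ∀ z : ℂ, z.im ∈ Icc a b → 0 < z.im := fun z hz => ha.trans_le hz.1
  have hC2 : ∀ z : ℂ, 0 < z.im → ContDiffAt ℝ 2 u z := fun z hz =>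
    hu.contDiffAt ((isOpen_lt continuous_const continuous_im).mem_nhds hz)
  refine sub_nonpos.mp (nonpos_of_laplacian_pos_of_periodic (w := u - fun w => barrier α β w.im)
    (fun z hz => (hC2 z (him_pos z hz)).sub (contDiffAt_barrier_im α β (him_pos z hz)))
    (fun n z hz => by simp [hper n z (him_pos z hz)]) (fun z hz hpos => ?_)
    (fun z hz => by simpa [hz] using hbot z hz) (fun z hz => by simpa [hz] using htop z hz) hz)
  have hz₀ : 0 < z.im := ha.trans hz.1
  rw [(hC2 z hz₀).laplacian_sub (contDiffAt_barrier_im α β hz₀)]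
  have hdiff : 0 < z.im ^ 2 * (Δ u z - Δ (fun w : ℂ => barrier α β w.im) z) := by
    have := im_sq_mul_laplacian_barrier α β hz₀
    have := hsub z hz₀
    simp only [Pi.sub_apply, sub_pos] at hpos
    linarith [mul_sub (z.im ^ 2) (Δ u z) (Δ (fun w : ℂ => barrier α β w.im) z)]
  exact pos_of_mul_pos_right hdiff (sq_nonneg _)

-- `T` makes `t T⁴` dominate the growth bound on the top line `y = T`, and the coefficient
-- `B + 2 A t³` makes the barrier dominate it on the bottom line `y = t`.
theorem le_barrier_of_growth_bound {u : ℂ → ℝ} (hu : ContDiffOn ℝ 2 u {z | 0 < z.im})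
    (hper : ∀ (n : ℤ) z, 0 < z.im → u (z + n) = u z)
    (hsub : ∀ z, 0 < z.im → 12 * u z ≤ z.im ^ 2 * Δ u z) {A B : ℝ} (hA : 0 ≤ A)
    (hbound : ∀ z, 0 < z.im → u z ≤ A * (1 + z.im ^ 3) + B * (z.im ^ 3)⁻¹)
    {t : ℝ} (ht : 0 < t) (ht₁ : t ≤ 1) {z : ℂ} (htz : t ≤ z.im) :
    u z ≤ barrier t (B + 2 * A * t ^ 3) z.im := by
  set T := max (max 1 z.im) (2 * A / t)
  have hT₁ : 1 ≤ T := (le_max_left _ _).trans (le_max_left _ _)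
  have hAT : 2 * A ≤ t * T := by
    rw [← div_le_iff₀' ht]
    exact le_max_right _ _
  refine le_barrier_of_le_on_lines (b := T) hu hper hsub ht (fun w hw => ?_) (fun w hw => ?_)
    ⟨htz, (le_max_right _ _).trans (le_max_left _ _)⟩
  · have hbarrier : barrier t (B + 2 * A * t ^ 3) t = t ^ 5 + B * (t ^ 3)⁻¹ + 2 * A := by
      unfold barrier
      field_simp
      ring
    have := hbound w (hw ▸ ht)
    rw [hw] at this
    nlinarith [pow_le_one₀ ht.le ht₁ (n := 3), pow_pos ht 5]
  · have hbarrier : barrier t (B + 2 * A * t ^ 3) T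
        = t * T * T ^ 3 + B * (T ^ 3)⁻¹ + 2 * A * t ^ 3 * (T ^ 3)⁻¹ := by
      unfold barrier
      ring
    have := hbound w (hw ▸ zero_lt_one.trans_le hT₁)
    rw [hw] at this
    have hT₃ : 1 ≤ T ^ 3 := one_le_pow₀ hT₁
    have : A * (1 + T ^ 3) ≤ t * T * T ^ 3 := by nlinarith
    have : 0 ≤ 2 * A * t ^ 3 * (T ^ 3)⁻¹ := by positivity
    linarith

theorem le_mul_inv_im_pow_three_of_subsolution {u : ℂ → ℝ}
    (hu : ContDiffOn ℝ 2 u {z | 0 < z.im}) (hper : ∀ (n : ℤ) z, 0 < z.im → u (z + n) = u z)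
    (hsub : ∀ z, 0 < z.im → 12 * u z ≤ z.im ^ 2 * Δ u z) {A B : ℝ} (hA : 0 ≤ A)
    (hbound : ∀ z, 0 < z.im → u z ≤ A * (1 + z.im ^ 3) + B * (z.im ^ 3)⁻¹)
    {z : ℂ} (hz : 0 < z.im) : u z ≤ B * (z.im ^ 3)⁻¹ := by
  have hlim : Tendsto (fun t => barrier t (B + 2 * A * t ^ 3) z.im) (𝓝[>] 0)
      (𝓝 (B * (z.im ^ 3)⁻¹)) := by
    have hcont : Continuous fun t => barrier t (B + 2 * A * t ^ 3) z.im := by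
      unfold barrier
      fun_prop
    simpa [barrier] using hcont.continuousWithinAt (s := Ioi 0) (x := 0) |>.tendsto
  refine ge_of_tendsto hlim (eventually_of_mem (Ioo_mem_nhdsGT (lt_min one_pos hz)) ?_)
  rintro t ⟨ht, ht'⟩
  exact le_barrier_of_growth_bound hu hper hsub hA hbound ht (ht'.le.trans (min_le_left _ _))
    (ht'.le.trans (min_le_right _ _))

theorem Complex.norm_le_of_forall_re_mul_le {w : ℂ} {r : ℝ}
    (h : ∀ c : ℂ, ‖c‖ ≤ 1 → (c * w).re ≤ r) : ‖w‖ ≤ r := by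
  have hc : ‖conj w / ‖w‖‖ ≤ 1 := by
    rw [norm_div, norm_conj, norm_real, norm_norm]
    exact div_self_le_one _
  have hre : (conj w / ‖w‖ * w).re = ‖w‖ := by
    rw [div_mul_eq_mul_div, conj_mul', ← ofReal_pow, ← ofReal_div, ofReal_re, sq, mul_self_div_self]
  simpa [hre] using h _ hc

theorem norm_le_mul_inv_im_pow_three {g : ℂ → ℂ} (hg : ContDiffOn ℝ 2 g {z | 0 < z.im})
    (hper : ∀ (n : ℤ) z, 0 < z.im → g (z + n) = g z)
    (heq : ∀ z, 0 < z.im → (z.im : ℂ) ^ 2 * Δ g z = 12 * g z) {A B : ℝ} (hA : 0 ≤ A)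
    (hbound : ∀ z, 0 < z.im → ‖g z‖ ≤ A * (1 + z.im ^ 3) + B * (z.im ^ 3)⁻¹)
    {z : ℂ} (hz : 0 < z.im) : ‖g z‖ ≤ B * (z.im ^ 3)⁻¹ := by
  refine norm_le_of_forall_re_mul_le fun c hc => ?_
  set φ : ℂ →L[ℝ] ℝ := reCLM.comp (ContinuousLinearMap.mul ℝ ℂ c)
  refine le_mul_inv_im_pow_three_of_subsolution (u := φ ∘ g) (φ.contDiff.comp_contDiffOn hg)
    (fun n z hz => by simp [hper n z hz]) (fun z hz => ?_) hA (fun z hz => ?_) hz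
  · have hgz := hg.contDiffAt ((isOpen_lt continuous_const continuous_im).mem_nhds hz)
    rw [hgz.laplacian_CLM_comp_left]
    have := congrArg (fun w => (c * w).re) (heq z hz)
    simp only [mul_left_comm c, re_ofReal_mul, ← ofReal_pow] at this
    change 12 * (c * g z).re ≤ z.im ^ 2 * (c * Δ g z).re
    rw [this]
    simp
  · calc (c * g z).re ≤ ‖c * g z‖ := re_le_norm _
      _ ≤ ‖g z‖ := by rw [norm_mul]; exact mul_le_of_le_one_left (norm_nonneg _) hc
      _ ≤ _ := hbound z hz

theorem UpperHalfPlane.im_smul_le_max (γ : SL(2, ℤ)) (τ : ℍ) :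
    (γ • τ).im ≤ max τ.im τ.im⁻¹ := by
  have hy := τ.im_pos
  have hnormSq : normSq (denom γ τ) = (γ 1 0 * τ.re + γ 1 1) ^ 2 + (γ 1 0 * τ.im) ^ 2 := by
    simp [ModularGroup.denom_apply, normSq_apply]
    ring
  rw [ModularGroup.im_smul_eq_div_normSq, div_le_iff₀ (normSq_denom_pos _ τ.im_ne_zero), hnormSq]
  rcases eq_or_ne (γ 1 0) 0 with hc | hc
  · have hd : γ 1 1 ≠ 0 := by
      have := γ.det_coe
      rw [Matrix.det_fin_two, hc, mul_zero, sub_zero] at this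
      exact right_ne_zero_of_mul_eq_one this
    have : (1 : ℝ) ≤ γ 1 1 ^ 2 := mod_cast (one_le_sq_iff_one_le_abs _).mpr (Int.one_le_abs hd)
    simp only [hc, Int.cast_zero, zero_mul, zero_add]
    nlinarith [le_max_left τ.im τ.im⁻¹]
  · have : (1 : ℝ) ≤ γ 1 0 ^ 2 := mod_cast (one_le_sq_iff_one_le_abs _).mpr (Int.one_le_abs hc)
    have : τ.im⁻¹ * τ.im ^ 2 = τ.im := by field_simp
    nlinarith [le_max_right τ.im τ.im⁻¹, inv_pos.mpr hy, sq_nonneg ((γ 1 0 : ℝ) * τ.re + γ 1 1)]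

theorem apply_add_intCast_eq {E : Type*} {g : ℂ → E}
    (hinv : ∀ (γ : SL(2, ℤ)) (τ : ℍ), g ↑(γ • τ) = g τ) (n : ℤ) {z : ℂ} (hz : 0 < z.im) :
    g (z + n) = g z := by
  have := hinv (T ^ n) ⟨z, hz⟩
  rwa [coe_T_zpow_smul_eq] at this

theorem norm_le_of_invariant_of_norm_le_on_fd {E : Type*} [SeminormedAddCommGroup E]
    {g : ℂ → E} {C : ℝ} (hC : 0 ≤ C) (hinv : ∀ (γ : SL(2, ℤ)) (τ : ℍ), g ↑(γ • τ) = g τ)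
    (hgrowth : ∀ τ ∈ 𝒟, ‖g τ‖ ≤ C * τ.im ^ 3) {z : ℂ} (hz : 0 < z.im) :
    ‖g z‖ ≤ C * (1 + z.im ^ 3) + C * (z.im ^ 3)⁻¹ := by
  set τ : ℍ := ⟨z, hz⟩
  obtain ⟨γ, hγ⟩ := exists_smul_mem_fd τ
  have hmax : (γ • τ).im ^ 3 ≤ 1 + τ.im ^ 3 + (τ.im ^ 3)⁻¹ := by
    refine (pow_le_pow_left₀ (γ • τ).im_pos.le (UpperHalfPlane.im_smul_le_max γ τ) 3).trans ?_
    rcases max_cases τ.im τ.im⁻¹ with ⟨h, -⟩ | ⟨h, -⟩ <;> rw [h]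
    · linarith [inv_pos.mpr (pow_pos τ.im_pos 3)]
    · linarith [pow_pos τ.im_pos 3, inv_pow τ.im 3]
  calc ‖g z‖ = ‖g ↑(γ • τ)‖ := by rw [hinv]
    _ ≤ C * (1 + τ.im ^ 3 + (τ.im ^ 3)⁻¹) := (hgrowth _ hγ).trans (by gcongr)
    _ = C * (1 + z.im ^ 3) + C * (z.im ^ 3)⁻¹ := by rw [show τ.im = z.im from rfl]; ring

theorem norm_le_of_invariant_of_norm_le_mul_inv_im_pow_three {E : Type*}
    [SeminormedAddCommGroup E] {g : ℂ → E} {C : ℝ} (hC : 0 ≤ C)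
    (hinv : ∀ (γ : SL(2, ℤ)) (τ : ℍ), g ↑(γ • τ) = g τ)
    (hdecay : ∀ z : ℂ, 0 < z.im → ‖g z‖ ≤ C * (z.im ^ 3)⁻¹) {z : ℂ} (hz : 0 < z.im) :
    ‖g z‖ ≤ 8 * C := by
  set τ : ℍ := ⟨z, hz⟩
  obtain ⟨γ, hγ⟩ := exists_one_half_le_im_smul τ
  have : ((γ • τ).im ^ 3)⁻¹ ≤ 8 := by
    rw [inv_le_comm₀ (pow_pos (γ • τ).im_pos 3) (by norm_num)]
    calc (8 : ℝ)⁻¹ = (1 / 2) ^ 3 := by norm_num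
      _ ≤ _ := pow_le_pow_left₀ (by norm_num) hγ 3
  calc ‖g z‖ = ‖g ↑(γ • τ)‖ := by rw [hinv]
    _ ≤ C * 8 := (hdecay _ (γ • τ).im_pos).trans (mul_le_mul_of_nonneg_left this hC)
    _ = 8 * C := mul_comm _ _

theorem eq_zero_of_invariant_of_im_sq_mul_laplacian_eq {g : ℂ → ℂ} {C : ℝ}
    (hg : ContDiffOn ℝ 2 g {z | 0 < z.im}) (hinv : ∀ (γ : SL(2, ℤ)) (τ : ℍ), g ↑(γ • τ) = g τ)
    (heq : ∀ z, 0 < z.im → (z.im : ℂ) ^ 2 * Δ g z = 12 * g z)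
    (hgrowth : ∀ τ ∈ 𝒟, ‖g τ‖ ≤ C * τ.im ^ 3) {z : ℂ} (hz : 0 < z.im) : g z = 0 := by
  have hper (n : ℤ) (z : ℂ) (hz : 0 < z.im) := apply_add_intCast_eq hinv n hz
  have hC : 0 ≤ C := by simpa using (norm_nonneg _).trans (hgrowth _ I_mem_fd)
  have hdecay (z : ℂ) (hz : 0 < z.im) : ‖g z‖ ≤ C * (z.im ^ 3)⁻¹ :=
    norm_le_mul_inv_im_pow_three hg hper heq hC
      (fun _ => norm_le_of_invariant_of_norm_le_on_fd hC hinv hgrowth) hz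
  have hbounded (z : ℂ) (hz : 0 < z.im) : ‖g z‖ ≤ 8 * C * (1 + z.im ^ 3) + 0 * (z.im ^ 3)⁻¹ := by
    nlinarith [norm_le_of_invariant_of_norm_le_mul_inv_im_pow_three hC hinv hdecay hz, pow_pos hz 3]
  simpa using norm_le_mul_inv_im_pow_three hg hper heq (by positivity) hbounded hz

theorem im_sq_mul_laplacian_sub_eq {f₁ f₂ : ℂ → ℂ} {z s : ℂ} (hf₁ : ContDiffAt ℝ 2 f₁ z)
    (hf₂ : ContDiffAt ℝ 2 f₂ z) (h₁ : (z.im : ℂ) ^ 2 * laplacian f₁ z - 12 * f₁ z = s)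
    (h₂ : (z.im : ℂ) ^ 2 * laplacian f₂ z - 12 * f₂ z = s) :
    (z.im : ℂ) ^ 2 * Δ (f₁ - f₂) z = 12 * (f₁ - f₂) z := by
  rw [hf₁.laplacian_sub hf₂, ← hf₁.laplacian_eq_laplacian, ← hf₂.laplacian_eq_laplacian,
    Pi.sub_apply]
  linear_combination h₁ - h₂

theorem inhomogeneous_laplace_uniqueness (S f₁ f₂ : ℂ → ℂ)
    (hreg₁ : ContDiffOn ℝ 2 f₁ {z : ℂ | 0 < z.im})
    (hreg₂ : ContDiffOn ℝ 2 f₂ {z : ℂ | 0 < z.im})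
    (hinv₁ : ∀ γ : Matrix.SpecialLinearGroup (Fin 2) ℤ, ∀ z : ℂ, 0 < z.im →
      f₁ ((((γ : Matrix (Fin 2) (Fin 2) ℤ) 0 0 : ℂ) * z + ((γ : Matrix (Fin 2) (Fin 2) ℤ) 0 1 : ℂ)) /
          (((γ : Matrix (Fin 2) (Fin 2) ℤ) 1 0 : ℂ) * z + ((γ : Matrix (Fin 2) (Fin 2) ℤ) 1 1 : ℂ))) = f₁ z)
    (hinv₂ : ∀ γ : Matrix.SpecialLinearGroup (Fin 2) ℤ, ∀ z : ℂ, 0 < z.im →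
      f₂ ((((γ : Matrix (Fin 2) (Fin 2) ℤ) 0 0 : ℂ) * z + ((γ : Matrix (Fin 2) (Fin 2) ℤ) 0 1 : ℂ)) /
          (((γ : Matrix (Fin 2) (Fin 2) ℤ) 1 0 : ℂ) * z + ((γ : Matrix (Fin 2) (Fin 2) ℤ) 1 1 : ℂ))) = f₂ z)
    (heq₁ : ∀ z : ℂ, 0 < z.im →
      (z.im : ℂ) ^ 2 * laplacian f₁ z - 12 * f₁ z = S z)
    (heq₂ : ∀ z : ℂ, 0 < z.im →
      (z.im : ℂ) ^ 2 * laplacian f₂ z - 12 * f₂ z = S z)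
    (C₁ C₂ : ℝ)
    (hgrowth₁ : ∀ z : ℂ, 0 < z.im → |z.re| ≤ 1 / 2 → 1 ≤ z.re ^ 2 + z.im ^ 2 →
      ‖f₁ z‖ ≤ C₁ * z.im ^ 3)
    (hgrowth₂ : ∀ z : ℂ, 0 < z.im → |z.re| ≤ 1 / 2 → 1 ≤ z.re ^ 2 + z.im ^ 2 →
      ‖f₂ z‖ ≤ C₂ * z.im ^ 3) :
    ∀ z : ℂ, 0 < z.im → f₁ z = f₂ z := by
  intro z hz
  have hC2 {f : ℂ → ℂ} (hf : ContDiffOn ℝ 2 f {z : ℂ | 0 < z.im}) {w : ℂ} (hw : 0 < w.im) :=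
    hf.contDiffAt ((isOpen_lt continuous_const continuous_im).mem_nhds hw)
  refine sub_eq_zero.mp (eq_zero_of_invariant_of_im_sq_mul_laplacian_eq (g := f₁ - f₂)
    (C := C₁ + C₂) (hreg₁.sub hreg₂) (fun γ τ => ?_) (fun w hw => im_sq_mul_laplacian_sub_eq
      (hC2 hreg₁ hw) (hC2 hreg₂ hw) (heq₁ w hw) (heq₂ w hw)) (fun τ hτ => ?_) hz)
  · rw [UpperHalfPlane.coe_specialLinearGroup_apply, Pi.sub_apply, Pi.sub_apply]
    exact_mod_cast congrArg₂ (· - ·) (hinv₁ γ τ τ.im_pos) (hinv₂ γ τ τ.im_pos)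
  · have hnormSq : 1 ≤ τ.re ^ 2 + τ.im ^ 2 := by simpa [normSq_apply, sq] using hτ.1
    have h₁ : ‖f₁ τ‖ ≤ C₁ * τ.im ^ 3 := hgrowth₁ τ τ.im_pos hτ.2 hnormSq
    have h₂ : ‖f₂ τ‖ ≤ C₂ * τ.im ^ 3 := hgrowth₂ τ τ.im_pos hτ.2 hnormSq
    calc ‖(f₁ - f₂) τ‖ ≤ ‖f₁ τ‖ + ‖f₂ τ‖ := norm_sub_le _ _
      _ ≤ _ := by linarith
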